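/- Let X = αY + ε where α ≠ 0 is a real constant, Y and ε are independent square-integrable real random variables with Var(Y) > 0 and Var(ε) = σ_ε² > 0. Then for any measurable A ⊆ ℝ with P(Y ∈ A) > 0 and Var(Y | Y ∈ A) > 0, the conditional correlation of X and Y given Y ∈ A equals ρ / sqrt(ρ² + (1−ρ²)·Var(Y)/Var(Y | Y ∈ A)), where ρ = α·σ_Y / sqrt(α²σ_Y² + σ_ε²) is the unconditional correlation. -/

import Mathlib

open MeasureTheory ProbabilityTheory Filter Real Set

/-- Expectation of `f` conditioned on the event `A`. -/
noncomputable def cExp {Ω : Type*} [MeasurableSpace Ω] (μ : Measure Ω) (A : Set Ω)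
    (f : Ω → ℝ) : ℝ :=
  (∫ ω in A, f ω ∂μ) / (μ A).toReal

/-- Variance of `f` conditioned on the event `A`. -/
noncomputable def cVar {Ω : Type*} [MeasurableSpace Ω] (μ : Measure Ω) (A : Set Ω)
    (f : Ω → ℝ) : ℝ :=
  cExp μ A (fun ω => (f ω) ^ 2) - (cExp μ A f) ^ 2

/-- Covariance of `f` and `g` conditioned on the event `A`. -/
noncomputable def cCov {Ω : Type*} [MeasurableSpace Ω] (μ : Measure Ω) (A : Set Ω)
    (f g : Ω → ℝ) : ℝ :=
  cExp μ A (fun ω => f ω * g ω) - cExp μ A f * cExp μ A g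

/-- Correlation coefficient of `f` and `g` conditioned on the event `A`. -/
noncomputable def cCorr {Ω : Type*} [MeasurableSpace Ω] (μ : Measure Ω) (A : Set Ω)
    (f g : Ω → ℝ) : ℝ :=
  cCov μ A f g / Real.sqrt (cVar μ A f * cVar μ A g)

/-- The standard normal cumulative distribution function `Φ`. -/
noncomputable def stdPhi (x : ℝ) : ℝ := ((gaussianReal 0 1) (Set.Iic x)).toReal

/-- The standard normal density `φ`. -/
noncomputable def stdphi (x : ℝ) : ℝ := Real.exp (-x ^ 2 / 2) / Real.sqrt (2 * Real.pi)

/-!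
Conditioning on `Y ∈ A` does not affect the noise: `ε` is independent of `Y`, hence of the
indicator of `Y ∈ A`, so its conditional moments are its unconditional ones and it stays
uncorrelated with `Y`. Thus, conditionally on `Y ∈ A`, `Cov(X, Y) = α v` and
`Var X = α² v + σ_ε²` with `v = Var(Y | Y ∈ A)`, and the formula is the algebraic identity
`α v / √((α² v + σ_ε²) v) = ρ / √(ρ² + (1 - ρ²) σ_Y² / v)`.
-/

section ConditionalExpectation

variable {Ω : Type*} [MeasurableSpace Ω] {μ : Measure Ω} {B : Set Ω}

lemma cExp_add {f g : Ω → ℝ} (hf : IntegrableOn f B μ) (hg : IntegrableOn g B μ) :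
    cExp μ B (fun ω => f ω + g ω) = cExp μ B f + cExp μ B g := by
  rw [cExp, cExp, cExp, integral_add hf hg, add_div]

lemma cExp_const_mul (c : ℝ) (f : Ω → ℝ) :
    cExp μ B (fun ω => c * f ω) = c * cExp μ B f := by
  rw [cExp, cExp, integral_const_mul, mul_div_assoc]

lemma cExp_const [IsFiniteMeasure μ] (hB : μ B ≠ 0) (c : ℝ) : cExp μ B (fun _ => c) = c := by
  rw [cExp, setIntegral_const, smul_eq_mul, measureReal_def,
    mul_div_cancel_left₀ _ (ENNReal.toReal_ne_zero.2 ⟨hB, measure_ne_top μ B⟩)]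

variable {β γ : Type*} [MeasurableSpace β] [MeasurableSpace γ] {Y : Ω → β} {Z : Ω → γ}
  {f : β → ℝ} {g : γ → ℝ} {A : Set β}

lemma setIntegral_preimage_mul_of_indepFun (hYZ : IndepFun Y Z μ) (hY : Measurable Y)
    (hZ : Measurable Z) (hf : Measurable f) (hg : Measurable g) (hA : MeasurableSet A) :
    ∫ ω in Y ⁻¹' A, f (Y ω) * g (Z ω) ∂μ
      = (∫ ω in Y ⁻¹' A, f (Y ω) ∂μ) * ∫ ω, g (Z ω) ∂μ := by
  have hindicator : (Y ⁻¹' A).indicator (fun ω => f (Y ω) * g (Z ω))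
      = (A.indicator f ∘ Y) * (g ∘ Z) := by
    ext ω
    by_cases h : Y ω ∈ A <;> simp [h]
  rw [← integral_indicator (hY hA), ← integral_indicator (hY hA), hindicator,
    (hYZ.comp (hf.indicator hA) hg).integral_mul_eq_mul_integral
      ((hf.indicator hA).comp hY).aestronglyMeasurable (hg.comp hZ).aestronglyMeasurable]
  simp only [Function.comp_def, ← indicator_comp_right]

lemma cExp_preimage_mul_of_indepFun (hYZ : IndepFun Y Z μ) (hY : Measurable Y)
    (hZ : Measurable Z) (hf : Measurable f) (hg : Measurable g) (hA : MeasurableSet A) :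
    cExp μ (Y ⁻¹' A) (fun ω => f (Y ω) * g (Z ω))
      = cExp μ (Y ⁻¹' A) (fun ω => f (Y ω)) * ∫ ω, g (Z ω) ∂μ := by
  rw [cExp, cExp, setIntegral_preimage_mul_of_indepFun hYZ hY hZ hf hg hA, mul_div_right_comm]

lemma cExp_preimage_comp_of_indepFun [IsFiniteMeasure μ] (hYZ : IndepFun Y Z μ)
    (hY : Measurable Y) (hZ : Measurable Z) (hg : Measurable g) (hA : MeasurableSet A)
    (hB : μ (Y ⁻¹' A) ≠ 0) :
    cExp μ (Y ⁻¹' A) (fun ω => g (Z ω)) = ∫ ω, g (Z ω) ∂μ := by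
  simpa only [one_mul, cExp_const hB] using
    cExp_preimage_mul_of_indepFun (f := fun _ => (1 : ℝ)) hYZ hY hZ measurable_const hg hA

end ConditionalExpectation

section LinearModel

variable {Ω : Type*} [MeasurableSpace Ω] {μ : Measure Ω} {Y ε : Ω → ℝ} {A : Set ℝ}

lemma cCov_const_mul_add_of_indepFun [IsFiniteMeasure μ] (hind : IndepFun Y ε μ)
    (hY : Measurable Y) (hε : Measurable ε) (hY2 : MemLp Y 2 μ) (hε2 : MemLp ε 2 μ)
    (hA : MeasurableSet A) (hB : μ (Y ⁻¹' A) ≠ 0) (α : ℝ) :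
    cCov μ (Y ⁻¹' A) (fun ω => α * Y ω + ε ω) Y = α * cVar μ (Y ⁻¹' A) Y := by
  have hYi : IntegrableOn Y (Y ⁻¹' A) μ := (hY2.integrable one_le_two).integrableOn
  have hεi : IntegrableOn ε (Y ⁻¹' A) μ := (hε2.integrable one_le_two).integrableOn
  have hYsq : IntegrableOn (fun ω => Y ω ^ 2) (Y ⁻¹' A) μ := hY2.integrable_sq.integrableOn
  have hYε : IntegrableOn (fun ω => Y ω * ε ω) (Y ⁻¹' A) μ :=
    (hY2.integrable_mul hε2).integrableOn
  have hnoise : cExp μ (Y ⁻¹' A) ε = μ[ε] :=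
    cExp_preimage_comp_of_indepFun (g := id) hind hY hε measurable_id hA hB
  have hcross : cExp μ (Y ⁻¹' A) (fun ω => Y ω * ε ω) = cExp μ (Y ⁻¹' A) Y * μ[ε] :=
    cExp_preimage_mul_of_indepFun (f := id) (g := id) hind hY hε measurable_id measurable_id hA
  have hexpand : (fun ω => (α * Y ω + ε ω) * Y ω) = fun ω => α * Y ω ^ 2 + Y ω * ε ω := by
    ext ω
    ring
  rw [cCov, cVar, hexpand, cExp_add (hYsq.const_mul α) hYε, cExp_add (hYi.const_mul α) hεi,
    cExp_const_mul, cExp_const_mul, hcross, hnoise]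
  ring

lemma cVar_const_mul_add_of_indepFun [IsProbabilityMeasure μ] (hind : IndepFun Y ε μ)
    (hY : Measurable Y) (hε : Measurable ε) (hY2 : MemLp Y 2 μ) (hε2 : MemLp ε 2 μ)
    (hA : MeasurableSet A) (hB : μ (Y ⁻¹' A) ≠ 0) (α : ℝ) :
    cVar μ (Y ⁻¹' A) (fun ω => α * Y ω + ε ω)
      = α ^ 2 * cVar μ (Y ⁻¹' A) Y + variance ε μ := by
  have hYi : IntegrableOn Y (Y ⁻¹' A) μ := (hY2.integrable one_le_two).integrableOn
  have hεi : IntegrableOn ε (Y ⁻¹' A) μ := (hε2.integrable one_le_two).integrableOn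
  have hYsq : IntegrableOn (fun ω => Y ω ^ 2) (Y ⁻¹' A) μ := hY2.integrable_sq.integrableOn
  have hεsq : IntegrableOn (fun ω => ε ω ^ 2) (Y ⁻¹' A) μ := hε2.integrable_sq.integrableOn
  have hYε : IntegrableOn (fun ω => Y ω * ε ω) (Y ⁻¹' A) μ :=
    (hY2.integrable_mul hε2).integrableOn
  have hnoise : cExp μ (Y ⁻¹' A) ε = μ[ε] :=
    cExp_preimage_comp_of_indepFun (g := id) hind hY hε measurable_id hA hB
  have hnoise_sq : cExp μ (Y ⁻¹' A) (fun ω => ε ω ^ 2) = μ[ε ^ 2] :=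
    cExp_preimage_comp_of_indepFun (g := (· ^ 2)) hind hY hε (measurable_id.pow_const 2) hA hB
  have hcross : cExp μ (Y ⁻¹' A) (fun ω => Y ω * ε ω) = cExp μ (Y ⁻¹' A) Y * μ[ε] :=
    cExp_preimage_mul_of_indepFun (f := id) (g := id) hind hY hε measurable_id measurable_id hA
  have hexpand : (fun ω => (α * Y ω + ε ω) ^ 2)
      = fun ω => (α ^ 2 * Y ω ^ 2 + 2 * α * (Y ω * ε ω)) + ε ω ^ 2 := by
    ext ω
    ring
  have hYYε : IntegrableOn (fun ω => α ^ 2 * Y ω ^ 2 + 2 * α * (Y ω * ε ω)) (Y ⁻¹' A) μ :=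
    (hYsq.const_mul _).add (hYε.const_mul _)
  rw [cVar, cVar, hexpand, cExp_add hYYε hεsq,
    cExp_add (hYsq.const_mul _) (hYε.const_mul _), cExp_add (hYi.const_mul α) hεi,
    cExp_const_mul, cExp_const_mul, cExp_const_mul, hcross, hnoise, hnoise_sq,
    variance_eq_sub hε2]
  ring

end LinearModel

lemma cov_div_sqrt_var_eq_of_corr {α v V s ρ : ℝ} (hv : 0 < v) (hV : 0 < V) (hs : 0 < s)
    (hρ : ρ = α * √V / √(α ^ 2 * V + s)) :
    α * v / √((α ^ 2 * v + s) * v) = ρ / √(ρ ^ 2 + (1 - ρ ^ 2) * V / v) := by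
  have hD : 0 < α ^ 2 * V + s := by positivity
  have hE : 0 < α ^ 2 * v + s := by positivity
  have hinner : ρ ^ 2 + (1 - ρ ^ 2) * V / v
      = V * (α ^ 2 * v + s) / ((α ^ 2 * V + s) * v) := by
    rw [hρ, div_pow, mul_pow, sq_sqrt hV.le, sq_sqrt hD.le]
    field_simp
    ring
  rw [hinner, hρ, sqrt_div (by positivity), sqrt_mul hV.le, sqrt_mul hD.le, sqrt_mul hE.le]
  field_simp
  rw [sq_sqrt hv.le]

theorem stmt7_general {Ω : Type*} [MeasurableSpace Ω] (P : Measure Ω) [IsProbabilityMeasure P]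
    (Y ε : Ω → ℝ) (hY : Measurable Y) (hε : Measurable ε)
    (hY2 : MemLp Y 2 P) (hε2 : MemLp ε 2 P)
    (hind : IndepFun Y ε P)
    (α : ℝ)
    (σε : ℝ) (hσε : 0 < σε) (hVarε : variance ε P = σε ^ 2)
    (hVarY : 0 < variance Y P)
    (X : Ω → ℝ) (hX : X = fun ω => α * Y ω + ε ω)
    (ρ : ℝ)
    (hρ : ρ = α * Real.sqrt (variance Y P)
        / Real.sqrt (α ^ 2 * variance Y P + σε ^ 2))
    (A : Set ℝ) (hA : MeasurableSet A) (hpos : 0 < P (Y ⁻¹' A))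
    (hVarA : 0 < cVar P (Y ⁻¹' A) Y) :
    cCorr P (Y ⁻¹' A) X Y
      = ρ / Real.sqrt (ρ ^ 2 + (1 - ρ ^ 2) * variance Y P / cVar P (Y ⁻¹' A) Y) := by
  subst hX
  rw [cCorr, cCov_const_mul_add_of_indepFun hind hY hε hY2 hε2 hA hpos.ne',
    cVar_const_mul_add_of_indepFun hind hY hε hY2 hε2 hA hpos.ne', hVarε]
  exact cov_div_sqrt_var_eq_of_corr hVarA hVarY (by positivity) hρ

theorem stmt7 {Ω : Type*} [MeasurableSpace Ω] (P : Measure Ω) [IsProbabilityMeasure P]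
    (Y ε : Ω → ℝ) (hY : Measurable Y) (hε : Measurable ε)
    (hY2 : MemLp Y 2 P) (hε2 : MemLp ε 2 P)
    (hind : IndepFun Y ε P)
    (α : ℝ) (hα : α ≠ 0)
    (σε : ℝ) (hσε : 0 < σε) (hVarε : variance ε P = σε ^ 2)
    (hVarY : 0 < variance Y P)
    (X : Ω → ℝ) (hX : X = fun ω => α * Y ω + ε ω)
    (ρ : ℝ)
    (hρ : ρ = α * Real.sqrt (variance Y P)
        / Real.sqrt (α ^ 2 * variance Y P + σε ^ 2))
    (A : Set ℝ) (hA : MeasurableSet A) (hpos : 0 < P (Y ⁻¹' A))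
    (hVarA : 0 < cVar P (Y ⁻¹' A) Y) :
    cCorr P (Y ⁻¹' A) X Y
      = ρ / Real.sqrt (ρ ^ 2 + (1 - ρ ^ 2) * variance Y P / cVar P (Y ⁻¹' A) Y) :=
  stmt7_general P Y ε hY hε hY2 hε2 hind α σε hσε hVarε hVarY X hX ρ hρ A hA hpos hVarA
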